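/- arXiv:2404.18281 — 3 statements merged into one kernel-verified Lean document; each statement's English description precedes it below -/
import Mathlib

section
/- For all integers 1 ≤ j ≤ k, F(k,j) = F(k,j−1) − (−1)^k F(k−1,j−1) + (−1)^{⌊k/2⌋} F_{k−1}. -/
open Filter Finset Real

/-- `F_n := (2^{n+1} − 4^{n+1}) B_{n+1}/(n+1)`, with Bernoulli numbers `B_1 = -1/2`. -/
def Fnum (n : ℕ) : ℚ := (2 ^ (n + 1) - 4 ^ (n + 1)) * bernoulli (n + 1) / (n + 1)

/-- `F(k,j) := (−1)^{⌊k/2⌋} ∑_{n=1}^{j} binom(j,n) F_{k−n}`. -/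
def Fcal (k j : ℕ) : ℚ :=
  (-1 : ℚ) ^ (k / 2) * ∑ n ∈ Finset.Icc 1 j, (j.choose n : ℚ) * Fnum (k - n)

/-! The recurrence holds for an arbitrary sequence in place of `F_n`: it is Pascal's rule
`C(j+1,n) = C(j,n) + C(j,n-1)` applied to the sum, together with the parity identity
`⌊(k+1)/2⌋ ≡ k + ⌊k/2⌋ (mod 2)` that matches the signs of `F(k+1,·)` and `F(k,·)`. -/

theorem Finset.sum_range_succ_eq_add_sum_Icc_one {M : Type*} [AddCommMonoid M] (f : ℕ → M)
    (j : ℕ) : ∑ n ∈ range (j + 1), f n = f 0 + ∑ n ∈ Icc 1 j, f n := by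
  rw [Nat.range_succ_eq_Icc_zero, ← insert_Icc_add_one_left_eq_Icc j.zero_le,
    sum_insert (by simp), zero_add]

theorem Finset.sum_Icc_one_choose_succ_mul {R : Type*} [NonAssocRing R] (f : ℕ → R)
    (j k : ℕ) :
    ∑ n ∈ Icc 1 (j + 1), ((j + 1).choose n : R) * f (k + 1 - n) =
      ∑ n ∈ Icc 1 j, (j.choose n : R) * f (k + 1 - n) + f k +
        ∑ n ∈ Icc 1 j, (j.choose n : R) * f (k - n) := by
  have pascal := sum_choose_succ_mul (fun n _ => f (k + 1 - n)) j
  simp only [sum_range_succ_eq_add_sum_Icc_one, Nat.choose_zero_right, Nat.cast_one, one_mul,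
    Nat.add_sub_add_right, Nat.sub_zero] at pascal
  rw [add_assoc (f (k + 1)), ← add_assoc _ (f k)] at pascal
  exact add_left_cancel pascal

theorem neg_one_pow_succ_div_two {R : Type*} [Monoid R] [HasDistribNeg R] (k : ℕ) :
    (-1 : R) ^ ((k + 1) / 2) = (-1) ^ k * (-1) ^ (k / 2) := by
  obtain ⟨m, rfl | rfl⟩ := Nat.even_or_odd' k
  · rw [show (2 * m + 1) / 2 = m by omega, show 2 * m / 2 = m by omega, pow_mul]
    simp
  · rw [show (2 * m + 1 + 1) / 2 = m + 1 by omega, show (2 * m + 1) / 2 = m by omega,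
      pow_succ, pow_succ, pow_mul]
    simp

/-- For all integers `1 ≤ j ≤ k`,
`F(k,j) = F(k,j−1) − (−1)^k F(k−1,j−1) + (−1)^{⌊k/2⌋} F_{k−1}`. -/
theorem Fcal_recurrence (k j : ℕ) (hj : 1 ≤ j) (hjk : j ≤ k) :
    Fcal k j =
      Fcal k (j - 1) - (-1 : ℚ) ^ k * Fcal (k - 1) (j - 1) +
        (-1 : ℚ) ^ (k / 2) * Fnum (k - 1) := by
  obtain ⟨j, rfl⟩ : ∃ i, j = i + 1 := ⟨j - 1, by omega⟩
  obtain ⟨k, rfl⟩ : ∃ i, k = i + 1 := ⟨k - 1, by omega⟩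
  simp only [Fcal, Nat.add_sub_cancel, sum_Icc_one_choose_succ_mul, neg_one_pow_succ_div_two]
  ring
end

section
/- For all integers 1 ≤ j ≤ k, G(k,j) = G(k,j−1) + (−1)^k G(k−1,j−1) + 𝔾_{k−1}. -/
open Filter Finset Real

/-- Genocchi numbers `G_n := 2(1 − 2ⁿ)Bₙ`, with Bernoulli numbers `B_1 = -1/2`. -/
def Gnum (n : ℕ) : ℚ := 2 * (1 - 2 ^ n) * bernoulli n

/-- `𝔾_n := (−1)^{⌊n/2⌋} G_n`. -/
def GGnum (n : ℕ) : ℚ := (-1) ^ (n / 2) * Gnum n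

/-- `G(k,j) := (−1)^{⌊(k−1)/2⌋} ∑_{n=1}^{j} binom(j,n) G_{k−n}` (floor over ℤ). -/
def Gcal (k j : ℕ) : ℚ :=
  (-1 : ℚ) ^ (Int.fdiv ((k : ℤ) - 1) 2) *
    ∑ n ∈ Finset.Icc 1 j, (j.choose n : ℚ) * Gnum (k - n)

/- Pascal's rule `C(j+1,n) = C(j,n) + C(j,n-1)` splits the sum defining `G(k,j+1)` into the
sums for `G(k,j)` and `G(k-1,j)` plus the term `G_{k-1}`; the signs match because
`⌊(k-1)/2⌋ ≡ k + ⌊(k-2)/2⌋ (mod 2)`. -/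

theorem Finset.sum_Icc_one_eq_sum_range {M : Type*} [AddCommMonoid M] (f : ℕ → M) (m : ℕ) :
    ∑ n ∈ Icc 1 m, f n = ∑ i ∈ range m, f (i + 1) := by
  rw [range_eq_Ico, sum_Ico_add', ← Ico_add_one_right_eq_Icc]

theorem Finset.sum_Icc_one_choose_succ_smul {M : Type*} [AddCommMonoid M] (f : ℕ → M) (j : ℕ) :
    ∑ n ∈ Icc 1 (j + 1), (j + 1).choose n • f n =
      ∑ n ∈ Icc 1 j, j.choose n • f n + ∑ n ∈ Icc 1 j, j.choose n • f (n + 1) + f 1 := by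
  simp only [sum_Icc_one_eq_sum_range, Nat.choose_succ_succ', add_smul, sum_add_distrib]
  rw [sum_range_succ' (fun i ↦ j.choose i • f (i + 1)),
    sum_range_succ (fun i ↦ j.choose (i + 1) • f (i + 1)), Nat.choose_succ_self,
    Nat.choose_zero_right, zero_smul, one_smul, add_zero]
  abel

theorem sum_Icc_one_choose_mul_Gnum_succ (k j : ℕ) :
    ∑ n ∈ Icc 1 (j + 1), ((j + 1).choose n : ℚ) * Gnum (k - n) =
      ∑ n ∈ Icc 1 j, (j.choose n : ℚ) * Gnum (k - n) +
        ∑ n ∈ Icc 1 j, (j.choose n : ℚ) * Gnum (k - 1 - n) + Gnum (k - 1) := by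
  simp only [← nsmul_eq_mul, Nat.sub_sub, add_comm 1]
  exact sum_Icc_one_choose_succ_smul (fun n ↦ Gnum (k - n)) j

theorem neg_one_zpow_fdiv_two {α : Type*} [DivisionMonoid α] [HasDistribNeg α] (n : ℤ) :
    (-1 : α) ^ n.fdiv 2 = (-1) ^ (n + 1) * (-1) ^ (n - 1).fdiv 2 := by
  simp only [neg_one_zpow_eq_ite, Int.fdiv_eq_ediv_of_nonneg _ zero_le_two, Int.even_iff]
  split_ifs <;> simp <;> omega

theorem neg_one_zpow_natCast_fdiv_two {α : Type*} [DivisionMonoid α] [HasDistribNeg α] (n : ℕ) :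
    (-1 : α) ^ (n : ℤ).fdiv 2 = (-1) ^ (n / 2) := by
  rw [Int.fdiv_eq_ediv_of_nonneg _ zero_le_two]
  exact_mod_cast zpow_natCast (-1 : α) (n / 2)

/-- For all integers `1 ≤ j ≤ k`,
`G(k,j) = G(k,j−1) + (−1)^k G(k−1,j−1) + 𝔾_{k−1}`. -/
theorem Gcal_recurrence (k j : ℕ) (hj : 1 ≤ j) (hjk : j ≤ k) :
    Gcal k j =
      Gcal k (j - 1) + (-1 : ℚ) ^ k * Gcal (k - 1) (j - 1) + GGnum (k - 1) := by
  obtain ⟨k, rfl⟩ : ∃ k', k = k' + 1 := ⟨k - 1, by omega⟩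
  obtain ⟨j, rfl⟩ : ∃ j', j = j' + 1 := ⟨j - 1, by omega⟩
  have sign_succ : (-1 : ℚ) ^ (k : ℤ).fdiv 2 = (-1) ^ (k + 1) * (-1) ^ ((k : ℤ) - 1).fdiv 2 := by
    rw [neg_one_zpow_fdiv_two, ← Nat.cast_add_one, zpow_natCast]
  simp only [Gcal, GGnum, Nat.add_sub_cancel, Nat.cast_add_one, add_sub_cancel_right,
    sum_Icc_one_choose_mul_Gnum_succ]
  rw [← neg_one_zpow_natCast_fdiv_two, mul_add, mul_add, sign_succ]
  ring
end

section
/- For every integer k ≥ 0, H(k,k) = 0. -/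
open Filter Finset Real

/-- `h(j,n) := ∑_{u=n}^{j} (−1)^{j−u} binom(u−1, n−1)`. -/
def hnum (j n : ℕ) : ℤ :=
  ∑ u ∈ Finset.Icc n j, (-1 : ℤ) ^ (j - u) * ((u - 1).choose (n - 1))

/-- `H(k,j) := (−1)^{⌊(k−1)/2⌋} ∑_{n=1}^{j} h(j,n) G_{k−n}` (floor over ℤ). -/
def Hcal (k j : ℕ) : ℚ :=
  (-1 : ℚ) ^ (Int.fdiv ((k : ℤ) - 1) 2) *
    ∑ n ∈ Finset.Icc 1 j, (hnum j n : ℚ) * Gnum (k - n)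

/-!
Write `Q(a, b) = ∑ₘ (a choose m) G_{b+m}`. Exchanging the order of summation in the definition
of `h` turns `∑ₙ h(k, n) G_{k-n}` into `∑_{a+b=k-1} (-1)^b Q(a, b)`. The generating function
identity `(eᵗ + 1) ∑ Gₙ tⁿ/n! = 2t` gives `Q(a, 0) = (-1)^{a+1} G_a`, and Pascal's rule
`Q(a+1, b) = Q(a, b) + Q(a, b+1)` propagates this to the reflection law
`Q(a, b) = (-1)^{a+b+1} Q(b, a)`. So the sum changes sign under `(a, b) ↦ (b, a)` and vanishes.
-/

open Nat PowerSeries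

noncomputable def genocchiSeries : ℚ⟦X⟧ := mk fun n => Gnum n / n !

lemma genocchiSeries_eq :
    genocchiSeries = 2 * (bernoulliPowerSeries ℚ - rescale 2 (bernoulliPowerSeries ℚ)) := by
  ext n
  rw [show (2 : ℚ⟦X⟧) = C 2 from rfl, coeff_C_mul]
  simp [genocchiSeries, bernoulliPowerSeries, Gnum, coeff_rescale]
  ring

lemma exp_add_one_mul_genocchiSeries : (exp ℚ + 1) * genocchiSeries = 2 * X := by
  have hexp : exp ℚ - 1 ≠ 0 := fun h => by simpa [coeff_exp] using congrArg (coeff 1) h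
  have hexp2 : rescale 2 (exp ℚ) = exp ℚ ^ 2 := by
    simpa using (exp_pow_eq_rescale_exp (A := ℚ) 2).symm
  have hX : rescale (2 : ℚ) X = 2 * X := by
    rw [rescale_X, show (2 : ℚ⟦X⟧) = C 2 from rfl]
  have hB := bernoulliPowerSeries_mul_exp_sub_one ℚ
  have hB2 := congrArg (rescale (2 : ℚ)) hB
  rw [map_mul, map_sub, map_one, hexp2, hX] at hB2
  apply mul_left_cancel₀ hexp
  rw [genocchiSeries_eq]
  linear_combination (2 * (exp ℚ + 1)) * hB - 2 * hB2

lemma sum_choose_mul_Gnum_add_Gnum (b : ℕ) :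
    ∑ m ∈ range (b + 1), (b.choose m : ℚ) * Gnum m + Gnum b = if b = 1 then 2 else 0 := by
  have h := congrArg (coeff b) exp_add_one_mul_genocchiSeries
  rw [mul_comm, mul_add, mul_one, map_add, coeff_mul, Nat.sum_antidiagonal_eq_sum_range_succ_mk,
    show (2 : ℚ⟦X⟧) = C 2 from rfl, coeff_C_mul, coeff_X] at h
  have hb : (b ! : ℚ) ≠ 0 := by positivity
  have hterm : ∀ m ∈ range (b + 1),
      coeff m genocchiSeries * coeff (b - m) (exp ℚ) = (b.choose m : ℚ) * Gnum m / b ! := by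
    intro m hm
    rw [cast_choose ℚ (Nat.lt_succ_iff.mp (mem_range.mp hm))]
    simp [genocchiSeries, coeff_exp]
    field_simp
  rw [sum_congr rfl hterm, ← sum_div] at h
  simp only [genocchiSeries, coeff_mk] at h
  split_ifs at h ⊢ with hb1
  · subst hb1; norm_num at h ⊢; linarith
  · field_simp at h; linarith

lemma Gnum_one : Gnum 1 = 1 := by norm_num [Gnum]

lemma Gnum_eq_zero_of_odd {n : ℕ} (hodd : Odd n) (hn : 1 < n) : Gnum n = 0 := by
  rw [Gnum, bernoulli_eq_bernoulli'_of_ne_one hn.ne', bernoulli'_eq_zero_of_odd hodd hn, mul_zero]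

def genocchiBinomSum (a b : ℕ) : ℚ := ∑ m ∈ range (a + 1), (a.choose m : ℚ) * Gnum (b + m)

lemma genocchiBinomSum_zero_left (b : ℕ) : genocchiBinomSum 0 b = Gnum b := by
  simp [genocchiBinomSum]

lemma genocchiBinomSum_zero_right (a : ℕ) :
    genocchiBinomSum a 0 = (-1) ^ (a + 1) * Gnum a := by
  have h := sum_choose_mul_Gnum_add_Gnum a
  simp only [genocchiBinomSum, zero_add]
  rcases Nat.even_or_odd a with heven | hodd
  · rw [if_neg (by rintro rfl; simp at heven)] at h
    rw [heven.add_one.neg_one_pow]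
    linarith
  · rw [hodd.add_one.neg_one_pow]
    rcases Nat.lt_or_eq_of_le hodd.pos with ha | rfl
    · rw [if_neg ha.ne'] at h
      linarith [Gnum_eq_zero_of_odd hodd ha]
    · simp [Gnum_one] at h ⊢
      linarith

lemma genocchiBinomSum_succ_left (a b : ℕ) :
    genocchiBinomSum (a + 1) b = genocchiBinomSum a b + genocchiBinomSum a (b + 1) := by
  simp only [genocchiBinomSum, sum_choose_succ_mul (fun i _ => Gnum (b + i)), add_assoc,
    add_comm 1]

lemma genocchiBinomSum_comm (a b : ℕ) :
    genocchiBinomSum a b = (-1) ^ (a + b + 1) * genocchiBinomSum b a := by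
  induction a generalizing b with
  | zero =>
    rw [genocchiBinomSum_zero_left, genocchiBinomSum_zero_right, ← mul_assoc, ← pow_add]
    simp [← two_mul, pow_mul]
  | succ a ih =>
    rw [genocchiBinomSum_succ_left, ih, ih, genocchiBinomSum_succ_left b a]
    ring

lemma sum_antidiagonal_neg_one_pow_mul_genocchiBinomSum (n : ℕ) :
    ∑ p ∈ antidiagonal n, (-1 : ℚ) ^ p.2 * genocchiBinomSum p.1 p.2 = 0 := by
  refine self_eq_neg.mp ?_
  conv_lhs => rw [← Nat.sum_antidiagonal_swap]
  rw [← sum_neg_distrib]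
  refine sum_congr rfl fun ⟨a, b⟩ _ => ?_
  rw [Prod.fst_swap, Prod.snd_swap, genocchiBinomSum_comm b a]
  have hsq : (-1 : ℚ) ^ (a + a) = 1 := Even.neg_one_pow ⟨a, rfl⟩
  linear_combination (-(-1) ^ b * genocchiBinomSum a b) * hsq

lemma genocchiBinomSum_tsub_eq_sum {v j : ℕ} (hvj : v ≤ j) :
    genocchiBinomSum v (j - v) = ∑ i ∈ range (v + 1), (v.choose i : ℚ) * Gnum (j - i) := by
  rw [genocchiBinomSum, ← sum_range_reflect]
  refine sum_congr rfl fun i hi => ?_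
  have hiv : i ≤ v := Nat.lt_succ_iff.mp (mem_range.mp hi)
  rw [add_tsub_cancel_right, choose_symm hiv]
  congr 2
  omega

lemma hnum_succ_succ (j i : ℕ) :
    hnum (j + 1) (i + 1) = ∑ v ∈ Icc i j, (-1) ^ (j - v) * (v.choose i : ℤ) := by
  rw [hnum, ← map_add_right_Icc, sum_map]
  simp

lemma sum_hnum_mul_Gnum (j : ℕ) :
    ∑ n ∈ Icc 1 (j + 1), (hnum (j + 1) n : ℚ) * Gnum (j + 1 - n) =
      ∑ p ∈ antidiagonal j, (-1 : ℚ) ^ p.2 * genocchiBinomSum p.1 p.2 := by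
  rw [← map_add_right_Icc 0 j 1, sum_map, Nat.sum_antidiagonal_eq_sum_range_succ
    (fun a b => (-1 : ℚ) ^ b * genocchiBinomSum a b), range_succ_eq_Icc_zero]
  simp only [addRightEmbedding_apply, hnum_succ_succ]
  push_cast
  simp only [sum_mul]
  rw [sum_comm' (s' := fun v => Icc 0 v) (t' := Icc 0 j) (by intros; simp only [mem_Icc]; omega)]
  refine sum_congr rfl fun v hv => ?_
  rw [genocchiBinomSum_tsub_eq_sum (mem_Icc.mp hv).2, mul_sum, range_succ_eq_Icc_zero]
  exact sum_congr rfl fun i _ => by ring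

/-- For every integer `k ≥ 0`, `H(k,k) = 0`. -/
theorem Hcal_diag_eq_zero (k : ℕ) : Hcal k k = 0 := by
  rcases k with _ | j
  · simp [Hcal]
  · rw [Hcal, sum_hnum_mul_Gnum, sum_antidiagonal_neg_one_pow_mul_genocchiBinomSum, mul_zero]
end
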